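/- Let G be a finite set of finite nonempty sets and h : G → ℝ. Define L^{++}(x,y) = Σ_{u∈G, x⊆u, y⊆u} h(u). Then det(L^{++}) = Π_{x∈G} h(x). -/

import Mathlib

/-!
`L⁺⁺ = Z D Zᵀ`, where `Z x u = [x ⊆ u]` is the zeta matrix of the inclusion order on `G` and
`D = diag h`. Ordering `G` along a linear extension of inclusion makes `Z` upper unitriangular,
so `det Z = 1` and `det L⁺⁺ = det D = ∏ h`.
-/

open Finset Matrix

namespace Matrix

def zetaMatrix (ι R : Type*) [LE ι] [DecidableLE ι] [Zero R] [One R] : Matrix ι ι R :=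
  of fun i j => if i ≤ j then 1 else 0

variable {ι R : Type*} [Fintype ι] [DecidableEq ι] [PartialOrder ι] [DecidableLE ι]

theorem zetaMatrix_mul_diagonal_mul_transpose_apply [NonAssocSemiring R] (w : ι → R) (i j : ι) :
    (zetaMatrix ι R * diagonal w * (zetaMatrix ι R)ᵀ) i j = ∑ k with i ≤ k ∧ j ≤ k, w k := by
  rw [mul_apply, sum_filter]
  refine sum_congr rfl fun k _ => ?_
  simp only [mul_diagonal, transpose_apply, zetaMatrix, of_apply, ite_and]
  split_ifs <;> simp

variable [CommRing R]

theorem det_zetaMatrix : (zetaMatrix ι R).det = 1 := by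
  let _ : Fintype (LinearExtension ι) := inferInstanceAs (Fintype ι)
  let _ : DecidableEq (LinearExtension ι) := inferInstanceAs (DecidableEq ι)
  let Z : Matrix (LinearExtension ι) (LinearExtension ι) R := zetaMatrix ι R
  have hZ : Z.IsUpperTriangular := fun i j hji =>
    if_neg fun hij => ((toLinearExtension (α := ι)).monotone hij).not_gt hji
  calc (zetaMatrix ι R).det = Z.det := rfl
    _ = ∏ i, Z i i := det_of_isUpperTriangular hZ
    _ = 1 := prod_eq_one fun i _ => if_pos le_rfl

theorem det_zetaMatrix_mul_diagonal_mul_transpose (w : ι → R) :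
    (zetaMatrix ι R * diagonal w * (zetaMatrix ι R)ᵀ).det = ∏ i, w i := by
  rw [det_mul, det_mul, det_transpose, det_zetaMatrix, det_diagonal, one_mul, mul_one]

end Matrix

theorem stmt_6_general (G : Finset (Finset ℕ))
    (h : Finset ℕ → ℝ)
    (Lpp : Matrix {x // x ∈ G} {x // x ∈ G} ℝ)
    (hLpp : ∀ x y, Lpp x y = ∑ u ∈ G.filter (fun u => x.1 ⊆ u ∧ y.1 ⊆ u), h u) :
    Lpp.det = ∏ x ∈ G, h x := by
  have hfact : Lpp = zetaMatrix G ℝ * diagonal (fun u : G => h u) * (zetaMatrix G ℝ)ᵀ := by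
    ext x y
    rw [hLpp, zetaMatrix_mul_diagonal_mul_transpose_apply, sum_filter, sum_filter,
      ← sum_coe_sort G]
    rfl
  rw [hfact, det_zetaMatrix_mul_diagonal_mul_transpose, prod_coe_sort G h]

theorem stmt_6 (G : Finset (Finset ℕ)) (hne : ∀ x ∈ G, x.Nonempty)
    (h : Finset ℕ → ℝ)
    (Lpp : Matrix {x // x ∈ G} {x // x ∈ G} ℝ)
    (hLpp : ∀ x y, Lpp x y = ∑ u ∈ G.filter (fun u => x.1 ⊆ u ∧ y.1 ⊆ u), h u) :
    Lpp.det = ∏ x ∈ G, h x :=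
  stmt_6_general G h Lpp hLpp
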